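/- Let $V$ be a linear subspace of a real or complex $L_2(\mu)$. If $V$ does $\sigma$-Hölder stable phase retrieval with constant $C$, i.e. $\inf_{|\alpha|=1}\|f-\alpha g\| \leq C \||f|-|g|\|^{\sigma}(\|f\|+\|g\|)^{1-\sigma}$ for all $f,g \in V$, then $V$ does Lipschitz stable phase retrieval with constant $(4C)^{1/\sigma}$, i.e. $\inf_{|\alpha|=1}\|f-\alpha g\| \leq (4C)^{1/\sigma}\||f|-|g|\|$ for all $f,g \in V$. -/

import Mathlib

open MeasureTheory RCLike
open scoped ENNReal InnerProductSpace

/-- The quotient distance `inf_{|α|=1} ‖f - α g‖` modulo a global unimodular phase. -/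
noncomputable def phaseDist (𝕜 : Type*) {E : Type*} [RCLike 𝕜] [NormedAddCommGroup E]
    [NormedSpace 𝕜 E] (f g : E) : ℝ :=
  ⨅ α : {a : 𝕜 // ‖a‖ = 1}, ‖f - (α : 𝕜) • g‖

/-- The `L₂` norm of `|f| - |g|` (pointwise moduli), as a real number. -/
noncomputable def absDiffNorm {Ω 𝕜 : Type*} [MeasurableSpace Ω] [RCLike 𝕜]
    (μ : Measure Ω) (f g : Lp 𝕜 2 μ) : ℝ :=
  (eLpNorm (fun ω => ‖(f : Ω → 𝕜) ω‖ - ‖(g : Ω → 𝕜) ω‖) 2 μ).toReal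

section Aux
variable {𝕜 E : Type*} [RCLike 𝕜] [NormedAddCommGroup E] [InnerProductSpace 𝕜 E]

lemma swap_norm_sq_diff (x y : ℝ) (a b : E) :
    ‖(x:𝕜) • a + (y:𝕜) • b‖ ^ 2 - ‖(y:𝕜) • a + (x:𝕜) • b‖ ^ 2
      = (x^2 - y^2) * (‖a‖^2 - ‖b‖^2) := by
  have e1 : ⟪(x:𝕜) • a, (y:𝕜) • b⟫_𝕜 = ((x*y : ℝ):𝕜) * ⟪a,b⟫_𝕜 := by
    rw [inner_smul_left, inner_smul_right, conj_ofReal]; push_cast; ring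
  have e2 : ⟪(y:𝕜) • a, (x:𝕜) • b⟫_𝕜 = ((x*y : ℝ):𝕜) * ⟪a,b⟫_𝕜 := by
    rw [inner_smul_left, inner_smul_right, conj_ofReal]; push_cast; ring
  have h1 := norm_add_sq (𝕜 := 𝕜) ((x:𝕜) • a) ((y:𝕜) • b)
  have h2 := norm_add_sq (𝕜 := 𝕜) ((y:𝕜) • a) ((x:𝕜) • b)
  rw [e1] at h1; rw [e2] at h2
  simp only [norm_smul, norm_ofReal, re_ofReal_mul] at h1 h2
  rw [h1, h2]
  ring_nf
  nlinarith [sq_abs x, sq_abs y, sq_nonneg (‖a‖*‖b‖)]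

lemma real_div_step {U V A B R : ℝ} (hU : 0 ≤ U) (hV : 0 ≤ V)
    (hR : 1 ≤ R) (hsum : A + B ≤ 2*(U+V))
    (hkey : |U - V| * (U+V) = R*(|A-B| * (A+B))) : |U - V| ≤ 2 * R * |A-B| := by
  rcases eq_or_lt_of_le (by positivity : (0:ℝ) ≤ U + V) with h0 | h0
  · have hu0 : U = 0 := by linarith
    have hv0 : V = 0 := by linarith
    rw [hu0, hv0]
    simp only [sub_zero, abs_zero]
    positivity
  · rw [← mul_le_mul_iff_of_pos_right h0, hkey]
    nlinarith [mul_le_mul_of_nonneg_left hsum (by positivity : (0:ℝ) ≤ R * |A-B|)]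

lemma swap_abs_le {x y : ℝ} (hxy : x + y = 1) (hR : 1 ≤ x - y) (a b : E) :
    |‖(x:𝕜) • a + (y:𝕜) • b‖ - ‖(y:𝕜) • a + (x:𝕜) • b‖| ≤ 2*(x-y)*|‖a‖-‖b‖| := by
  set u := (x:𝕜) • a + (y:𝕜) • b with hu
  set v := (y:𝕜) • a + (x:𝕜) • b with hv
  have huv_add : u + v = a + b := by
    have h : ((x:𝕜)+(y:𝕜)) = 1 := by rw [← ofReal_add, hxy, ofReal_one]
    calc u + v = ((x:𝕜)+(y:𝕜)) • (a+b) := by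
          rw [add_smul, smul_add, smul_add]; rw [hu, hv]; abel
      _ = a + b := by rw [h, one_smul]
  have huv_sub : u - v = ((x-y : ℝ):𝕜) • (a - b) := by
    rw [ofReal_sub, sub_smul, smul_sub, smul_sub, hu, hv]; abel
  have hxyabs : |x - y| = x - y := abs_of_nonneg (by linarith)
  have hna : ‖a+b‖ ≤ ‖u‖ + ‖v‖ := huv_add ▸ norm_add_le u v
  have hnb : ‖a-b‖ ≤ ‖u‖ + ‖v‖ := by
    have h1 : ‖u - v‖ = |x-y| * ‖a-b‖ := by rw [huv_sub, norm_smul, norm_ofReal]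
    have h2 := norm_sub_le u v
    rw [hxyabs] at h1
    nlinarith [norm_nonneg (a-b)]
  have h2a : 2*‖a‖ ≤ ‖a+b‖ + ‖a-b‖ := by
    have h := norm_add_le (a+b) (a-b)
    have e : (a+b)+(a-b) = (2:𝕜) • a := by rw [two_smul]; abel
    rw [e, norm_smul] at h
    have : ‖(2:𝕜)‖ = 2 := by
      rw [show (2:𝕜) = ((2:ℝ):𝕜) by push_cast; ring, norm_ofReal]; norm_num
    rw [this] at h; linarith
  have h2b : 2*‖b‖ ≤ ‖a+b‖ + ‖a-b‖ := by
    have h := norm_add_le (a+b) (b-a)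
    have e : (a+b)+(b-a) = (2:𝕜) • b := by rw [two_smul]; abel
    rw [e, norm_smul] at h
    have h2 : ‖(2:𝕜)‖ = 2 := by
      rw [show (2:𝕜) = ((2:ℝ):𝕜) by push_cast; ring, norm_ofReal]; norm_num
    rw [h2, norm_sub_rev b a] at h; linarith
  have hsum : ‖a‖ + ‖b‖ ≤ 2*(‖u‖+‖v‖) := by linarith
  have sq' : ‖u‖^2 - ‖v‖^2 = (x-y)*(‖a‖^2-‖b‖^2) := by
    have h := swap_norm_sq_diff (𝕜 := 𝕜) x y a b
    rw [← hu, ← hv] at h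
    rw [h]
    have : x^2 - y^2 = x - y := by nlinarith
    rw [this]
  have l1 : |‖u‖ - ‖v‖| * (‖u‖ + ‖v‖) = |‖u‖^2 - ‖v‖^2| := by
    rw [← abs_of_nonneg (by positivity : (0:ℝ) ≤ ‖u‖ + ‖v‖), ← abs_mul]
    ring_nf
  have l2 : |‖a‖-‖b‖| * (‖a‖+‖b‖) = |‖a‖^2 - ‖b‖^2| := by
    rw [← abs_of_nonneg (by positivity : (0:ℝ) ≤ ‖a‖ + ‖b‖), ← abs_mul]
    ring_nf
  have hkey : |‖u‖ - ‖v‖| * (‖u‖ + ‖v‖) = (x-y) * (|‖a‖-‖b‖| * (‖a‖+‖b‖)) := by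
    rw [l1, l2, sq', abs_mul, abs_of_nonneg (by linarith : (0:ℝ) ≤ x - y)]
  exact real_div_step (norm_nonneg u) (norm_nonneg v) hR hsum hkey

end Aux

section PD

variable {𝕜 E : Type*} [RCLike 𝕜] [NormedAddCommGroup E] [NormedSpace 𝕜 E]

instance unitSphereNonempty : Nonempty {a : 𝕜 // ‖a‖ = 1} := ⟨⟨1, norm_one⟩⟩

lemma phaseDist_le (f g : E) {α : 𝕜} (hα : ‖α‖ = 1) : phaseDist 𝕜 f g ≤ ‖f - α • g‖ :=
  ciInf_le ⟨0, by rintro _ ⟨β, rfl⟩; positivity⟩ (⟨α, hα⟩ : {a : 𝕜 // ‖a‖ = 1})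

lemma le_phaseDist (f g : E) (c : ℝ) (h : ∀ α : 𝕜, ‖α‖ = 1 → c ≤ ‖f - α • g‖) :
    c ≤ phaseDist 𝕜 f g :=
  le_ciInf fun α => h α α.2

lemma phaseDist_nonneg (f g : E) : 0 ≤ phaseDist 𝕜 f g :=
  le_phaseDist f g 0 fun _ _ => norm_nonneg _

end PD

set_option maxHeartbeats 1000000

/-- If a linear subspace `V ⊆ L₂(μ)` does `σ`-Hölder stable phase
retrieval with constant `C`, then it does Lipschitz stable phase retrieval with constant
`(4C)^{1/σ}`. -/
theorem stmt3 {Ω 𝕜 : Type*} [MeasurableSpace Ω] [RCLike 𝕜] (μ : Measure Ω)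
    (V : Submodule 𝕜 (Lp 𝕜 2 μ)) (σ C : ℝ) (hσ0 : 0 < σ) (hσ1 : σ ≤ 1) (hC : 1 ≤ C)
    (hHolder : ∀ f ∈ V, ∀ g ∈ V,
      phaseDist 𝕜 f g ≤ C * (absDiffNorm μ f g) ^ σ * (‖f‖ + ‖g‖) ^ (1 - σ)) :
    ∀ f ∈ V, ∀ g ∈ V,
      phaseDist 𝕜 f g ≤ (4 * C) ^ (1 / σ) * absDiffNorm μ f g := by
  intro f hf g hg
  by_contra hcon
  push_neg at hcon
  set K : ℝ := (4 * C) ^ (1 / σ) with hKdef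
  set d : ℝ := phaseDist 𝕜 f g with hddef
  set D : ℝ := absDiffNorm μ f g with hDdef
  set S : ℝ := ‖f‖ + ‖g‖ with hSdef
  have hC0 : (0:ℝ) < C := by linarith
  have h4C : (0:ℝ) < 4 * C := by linarith
  have hK : 0 < K := Real.rpow_pos_of_pos h4C _
  have hKσ : K ^ σ = 4 * C := by
    rw [hKdef, ← Real.rpow_mul h4C.le, one_div_mul_cancel (ne_of_gt hσ0), Real.rpow_one]
  have hD0 : 0 ≤ D := ENNReal.toReal_nonneg
  have hd0 : 0 < d := lt_of_le_of_lt (by positivity) hcon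
  have hdS : d ≤ S := by
    refine le_trans (phaseDist_le f g norm_one) ?_
    rw [one_smul]
    exact norm_sub_le f g
  have hS0 : 0 < S := lt_of_lt_of_le hd0 hdS
  have hDd : D < d / K := by
    rw [lt_div_iff₀ hK]
    calc D * K = K * D := mul_comm _ _
      _ < d := hcon
  have hHfg : d ≤ C * D ^ σ * S ^ (1 - σ) := hHolder f hf g hg
  -- Step: d ≤ S/2
  have hdS2 : d ≤ S / 2 := by
    by_contra hh
    push_neg at hh
    have hS1σ : (0:ℝ) < S ^ (1-σ) := Real.rpow_pos_of_pos hS0 _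
    have hSσ : S ^ σ * S ^ (1-σ) = S := by
      rw [← Real.rpow_add hS0]; norm_num
    have h2 : S / 2 < C * D ^ σ * S ^ (1-σ) := lt_of_lt_of_le hh hHfg
    have h3 : S ^ σ < 2 * C * D ^ σ := by
      have hS' : S ^ σ * S ^ (1-σ) < (2 * C * D ^ σ) * S ^ (1-σ) := by
        rw [hSσ]
        calc S = 2 * (S / 2) := by ring
          _ < 2 * (C * D ^ σ * S ^ (1-σ)) := by linarith
          _ = (2 * C * D ^ σ) * S ^ (1-σ) := by ring
      exact lt_of_mul_lt_mul_right hS' hS1σ.le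
    have h4 : d ^ σ ≤ S ^ σ := Real.rpow_le_rpow hd0.le hdS hσ0.le
    have h5 : (K * D) ^ σ < d ^ σ := Real.rpow_lt_rpow (by positivity) hcon hσ0
    have h6 : (K * D) ^ σ = 4 * C * D ^ σ := by
      rw [Real.mul_rpow hK.le hD0, hKσ]
    have hm : 0 ≤ C * D ^ σ := by positivity
    have h6' : (K * D) ^ σ = 4 * (C * D ^ σ) := by rw [h6]; ring
    have h3' : S ^ σ < 2 * (C * D ^ σ) := by rw [show 2 * (C * D ^ σ) = 2 * C * D ^ σ by ring]; exact h3
    linarith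
  -- optimal phase
  set c : 𝕜 := ⟪f, g⟫_𝕜 with hcdef
  set α₀ : 𝕜 := if c = 0 then (1:𝕜) else (‖c‖ : 𝕜) / c with hα₀def
  have hα₀ : ‖α₀‖ = 1 := by
    rw [hα₀def]
    split_ifs with h
    · exact norm_one
    · rw [norm_div, norm_ofReal, abs_norm, div_self (norm_ne_zero_iff.mpr h)]
  set g' : Lp 𝕜 2 μ := α₀ • g with hg'def
  have hg' : g' ∈ V := V.smul_mem _ hg
  have hip : ⟪f, g'⟫_𝕜 = ((‖c‖ : ℝ) : 𝕜) := by
    rw [hg'def, inner_smul_right, ← hcdef, hα₀def]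
    split_ifs with h
    · rw [h]; simp
    · rw [div_mul_cancel₀ _ h]
  have hng' : ‖g'‖ = ‖g‖ := by rw [hg'def, norm_smul, hα₀, one_mul]
  -- d = ‖f - g'‖
  have hle1 : d ≤ ‖f - g'‖ := phaseDist_le f g hα₀
  have hge1 : ‖f - g'‖ ≤ d := by
    refine le_phaseDist f g _ (fun α hα => ?_)
    have e1 : ‖f - g'‖ ^ 2 = ‖f‖^2 - 2 * ‖c‖ + ‖g‖^2 := by
      rw [norm_sub_sq (𝕜 := 𝕜), hip, hng']
      simp
    have e2 : ‖f - α • g‖ ^ 2 = ‖f‖^2 - 2 * re (α * c) + ‖α • g‖^2 := by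
      rw [norm_sub_sq (𝕜 := 𝕜), inner_smul_right, ← hcdef]
    have e3 : re (α * c) ≤ ‖c‖ := by
      calc re (α * c) ≤ ‖α * c‖ := re_le_norm _
        _ = ‖c‖ := by rw [norm_mul, hα, one_mul]
    have e4 : ‖α • g‖ = ‖g‖ := by rw [norm_smul, hα, one_mul]
    refine le_of_pow_le_pow_left₀ two_ne_zero (norm_nonneg _) ?_
    rw [e1, e2, e4]
    linarith
  have hdfg' : ‖f - g'‖ = d := le_antisymm hge1 hle1
  have hdsq : d ^ 2 = ‖f‖^2 - 2 * ‖c‖ + ‖g‖^2 := by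
    rw [← hdfg', norm_sub_sq (𝕜 := 𝕜), hip, hng']
    simp
  have hfg'sq : ‖f + g'‖ ^ 2 = ‖f‖^2 + 2 * ‖c‖ + ‖g‖^2 := by
    rw [norm_add_sq (𝕜 := 𝕜), hip, hng']
    simp
  have hfg'S : ‖f + g'‖ ≤ S := by
    rw [hSdef, ← hng']
    exact norm_add_le f g'
  have h3quarter : 3/4 * S^2 ≤ ‖f + g'‖ ^ 2 := by
    nlinarith [sq_nonneg (‖f‖ - ‖g‖), hd0.le, hS0.le]
  -- the swap pair
  set R : ℝ := S / d with hRdef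
  have hR1 : 1 ≤ R := by
    rw [hRdef, le_div_iff₀ hd0]; linarith
  have hR0 : (0:ℝ) < R := lt_of_lt_of_le one_pos hR1
  set x : ℝ := (1+R)/2 with hxdef
  set y : ℝ := (1-R)/2 with hydef
  have hxy : x + y = 1 := by rw [hxdef, hydef]; ring
  have hxmy : x - y = R := by rw [hxdef, hydef]; ring
  set u : Lp 𝕜 2 μ := (x:𝕜) • f + (y:𝕜) • g' with hudef
  set v : Lp 𝕜 2 μ := (y:𝕜) • f + (x:𝕜) • g' with hvdef
  have hu : u ∈ V := V.add_mem (V.smul_mem _ hf) (V.smul_mem _ hg')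
  have hv : v ∈ V := V.add_mem (V.smul_mem _ hf) (V.smul_mem _ hg')
  have huv_add : u + v = f + g' := by
    have h : ((x:𝕜)+(y:𝕜)) = 1 := by rw [← ofReal_add, hxy, ofReal_one]
    calc u + v = ((x:𝕜)+(y:𝕜)) • (f+g') := by
          rw [add_smul, smul_add, smul_add, hudef, hvdef]; abel
      _ = f + g' := by rw [h, one_smul]
  have huv_sub : u - v = ((R : ℝ):𝕜) • (f - g') := by
    rw [← hxmy, ofReal_sub, sub_smul, smul_sub, smul_sub, hudef, hvdef]; abel
  have hnuv_sub : ‖u - v‖ = S := by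
    rw [huv_sub, norm_smul, norm_ofReal, abs_of_nonneg (by linarith : (0:ℝ) ≤ R), hdfg', hRdef,
      div_mul_cancel₀ _ (ne_of_gt hd0)]
  have hnuv_add : ‖u + v‖ = ‖f + g'‖ := by rw [huv_add]
  -- the inner product of the pair is real
  set τ : ℝ := x*y*(‖f‖^2+‖g‖^2) + (x^2+y^2)*‖c‖ with hτdef
  have hinner_uv : ⟪u, v⟫_𝕜 = ((τ:ℝ):𝕜) := by
    have hff : ⟪f, f⟫_𝕜 = ((‖f‖^2 : ℝ) : 𝕜) := by
      rw [inner_self_eq_norm_sq_to_K]; push_cast; ring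
    have hgg : ⟪g', g'⟫_𝕜 = ((‖g‖^2 : ℝ) : 𝕜) := by
      rw [inner_self_eq_norm_sq_to_K, hng']; push_cast; ring
    have hgf : ⟪g', f⟫_𝕜 = ((‖c‖ : ℝ) : 𝕜) := by
      rw [← inner_conj_symm, hip, conj_ofReal]
    rw [hudef, hvdef]
    simp only [inner_add_left, inner_add_right, inner_smul_left, inner_smul_right, conj_ofReal]
    rw [hff, hgg, hip, hgf, hτdef]
    push_cast
    ring
  -- lower bound for phaseDist of the pair
  have hPDuv : ‖f + g'‖ ≤ phaseDist 𝕜 u v := by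
    refine le_phaseDist u v _ (fun α hα => ?_)
    have hexp : ‖u - α • v‖^2 = ‖u‖^2 - 2*re (α * ((τ:ℝ):𝕜)) + ‖v‖^2 := by
      rw [norm_sub_sq (𝕜:=𝕜), inner_smul_right, hinner_uv, norm_smul, hα, one_mul]
    have hre : re (α * ((τ:ℝ):𝕜)) ≤ |τ| := by
      calc re (α * ((τ:ℝ):𝕜)) ≤ ‖α * ((τ:ℝ):𝕜)‖ := re_le_norm _
        _ = |τ| := by rw [norm_mul, hα, one_mul, norm_ofReal]
    have hsub_sq : ‖u - v‖^2 = ‖u‖^2 - 2*τ + ‖v‖^2 := by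
      rw [norm_sub_sq (𝕜:=𝕜), hinner_uv, ofReal_re]
    have hadd_sq : ‖u + v‖^2 = ‖u‖^2 + 2*τ + ‖v‖^2 := by
      rw [norm_add_sq (𝕜:=𝕜), hinner_uv, ofReal_re]
    have hfS2 : ‖f + g'‖^2 ≤ ‖u - α • v‖^2 := by
      rcases le_or_gt 0 τ with ht | ht
      · have habs : |τ| = τ := abs_of_nonneg ht
        have hle : ‖f+g'‖^2 ≤ S^2 := pow_le_pow_left₀ (norm_nonneg _) hfg'S 2
        have hSsq : S^2 = ‖u‖^2 - 2*τ + ‖v‖^2 := by rw [← hsub_sq, hnuv_sub]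
        rw [hexp]
        rw [habs] at hre
        linarith
      · have habs : |τ| = -τ := abs_of_neg ht
        have hadd' : ‖f + g'‖^2 = ‖u‖^2 + 2*τ + ‖v‖^2 := by rw [← hadd_sq, hnuv_add]
        rw [hexp]
        rw [habs] at hre
        linarith
    exact le_of_pow_le_pow_left₀ two_ne_zero (norm_nonneg _) hfS2
  -- norm bounds for the pair
  have hn2 : ‖(2:𝕜)‖ = 2 := by
    rw [show (2:𝕜) = ((2:ℝ):𝕜) by push_cast; ring, norm_ofReal]; norm_num
  have hnu : ‖u‖ ≤ S := by
    have e : (2:𝕜) • u = (u+v)+(u-v) := by rw [two_smul]; abel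
    have h := norm_add_le (u+v) (u-v)
    rw [← e, norm_smul, hn2, hnuv_add, hnuv_sub] at h
    linarith [hfg'S]
  have hnv : ‖v‖ ≤ S := by
    have e : (2:𝕜) • v = (u+v)-(u-v) := by rw [two_smul]; abel
    have h := norm_sub_le (u+v) (u-v)
    rw [← e, norm_smul, hn2, hnuv_add, hnuv_sub] at h
    linarith [hfg'S]
  have huvsum : ‖u‖ + ‖v‖ ≤ 2*S := by linarith
  -- bound on absDiffNorm of the pair
  set G : Ω → ℝ := fun ω => ‖(f : Ω → 𝕜) ω‖ - ‖(g : Ω → 𝕜) ω‖ with hGdef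
  have hGfin : eLpNorm G 2 μ ≠ ⊤ := by
    have h1 : ∀ᵐ ω ∂μ, ‖G ω‖ ≤ ‖((f - g : Lp 𝕜 2 μ) : Ω → 𝕜) ω‖ := by
      filter_upwards [Lp.coeFn_sub f g] with ω hω
      rw [hGdef, hω]
      simp only [Pi.sub_apply, Real.norm_eq_abs]
      exact abs_norm_sub_norm_le _ _
    exact (lt_of_le_of_lt (eLpNorm_mono_ae h1) (Lp.eLpNorm_lt_top (f-g))).ne
  have hQptwise : ∀ᵐ ω ∂μ, ‖‖(u : Ω → 𝕜) ω‖ - ‖(v : Ω → 𝕜) ω‖‖ ≤ ‖((2*R:ℝ) • G) ω‖ := by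
    filter_upwards [Lp.coeFn_add ((x:𝕜) • f) ((y:𝕜) • g'),
      Lp.coeFn_add ((y:𝕜) • f) ((x:𝕜) • g'),
      Lp.coeFn_smul (x:𝕜) f, Lp.coeFn_smul (y:𝕜) g', Lp.coeFn_smul (y:𝕜) f,
      Lp.coeFn_smul (x:𝕜) g', Lp.coeFn_smul α₀ g] with ω h1 h2 h3 h4 h5 h6 h7
    have hgω : (g' : Ω → 𝕜) ω = α₀ * ((g : Ω → 𝕜) ω) := by
      rw [hg'def]; rw [h7]; simp
    have hngω : ‖(g' : Ω → 𝕜) ω‖ = ‖(g : Ω → 𝕜) ω‖ := by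
      rw [hgω, norm_mul, hα₀, one_mul]
    have huω : (u : Ω → 𝕜) ω = (x:𝕜) • ((f : Ω → 𝕜) ω) + (y:𝕜) • ((g' : Ω → 𝕜) ω) := by
      rw [hudef, h1]; simp only [Pi.add_apply]; rw [h3, h4]; simp
    have hvω : (v : Ω → 𝕜) ω = (y:𝕜) • ((f : Ω → 𝕜) ω) + (x:𝕜) • ((g' : Ω → 𝕜) ω) := by
      rw [hvdef, h2]; simp only [Pi.add_apply]; rw [h5, h6]; simp
    have key := swap_abs_le (𝕜 := 𝕜) (E := 𝕜) hxy (by rw [hxmy]; exact hR1)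
      ((f : Ω → 𝕜) ω) ((g' : Ω → 𝕜) ω)
    rw [huω, hvω, Real.norm_eq_abs]
    have hrhs : ‖((2*R:ℝ) • G) ω‖ = 2*R*|G ω| := by
      simp only [Pi.smul_apply, smul_eq_mul, Real.norm_eq_abs, abs_mul, abs_two,
        abs_of_pos hR0]
    rw [hrhs, hGdef]
    calc |‖(x:𝕜) • ((f : Ω → 𝕜) ω) + (y:𝕜) • ((g' : Ω → 𝕜) ω)‖
          - ‖(y:𝕜) • ((f : Ω → 𝕜) ω) + (x:𝕜) • ((g' : Ω → 𝕜) ω)‖|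
        ≤ 2*(x-y)*|‖(f : Ω → 𝕜) ω‖ - ‖(g' : Ω → 𝕜) ω‖| := key
      _ = 2*R*|‖(f : Ω → 𝕜) ω‖ - ‖(g : Ω → 𝕜) ω‖| := by rw [hxmy, hngω]
  have hQle : absDiffNorm μ u v ≤ 2*R*D := by
    have h1 : eLpNorm (fun ω => ‖(u : Ω → 𝕜) ω‖ - ‖(v : Ω → 𝕜) ω‖) 2 μ
        ≤ eLpNorm ((2*R:ℝ) • G) 2 μ := eLpNorm_mono_ae hQptwise
    rw [eLpNorm_const_smul] at h1
    have h2 := ENNReal.toReal_mono (ENNReal.mul_ne_top ENNReal.coe_ne_top hGfin) h1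
    rw [ENNReal.toReal_mul, ENNReal.coe_toReal, coe_nnnorm, Real.norm_eq_abs,
      abs_of_nonneg (by linarith : (0:ℝ) ≤ 2*R)] at h2
    exact h2
  -- apply the Hoelder hypothesis to the pair
  have hHuv : phaseDist 𝕜 u v ≤ C * (absDiffNorm μ u v) ^ σ * (‖u‖+‖v‖)^(1-σ) :=
    hHolder u hu v hv
  have hRD : 2 * R * D ≤ 2 * S / K := by
    have h : R * D ≤ S / K := by
      have h1 : R * D ≤ R * (d / K) := mul_le_mul_of_nonneg_left hDd.le hR0.le
      have h2 : R * (d / K) = S / K := by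
        rw [hRdef]; field_simp
      linarith
    calc 2 * R * D = 2 * (R * D) := by ring
      _ ≤ 2 * (S / K) := by linarith
      _ = 2 * S / K := by ring
  have hchain : ‖f + g'‖ ≤ C * (2*S/K)^σ * (2*S)^(1-σ) := by
    refine le_trans hPDuv (le_trans hHuv ?_)
    have hq1 : (absDiffNorm μ u v)^σ ≤ (2*S/K)^σ :=
      Real.rpow_le_rpow ENNReal.toReal_nonneg (le_trans hQle hRD) hσ0.le
    have hq2 : (‖u‖+‖v‖)^(1-σ) ≤ (2*S)^(1-σ) :=
      Real.rpow_le_rpow (add_nonneg (norm_nonneg _) (norm_nonneg _)) huvsum (by linarith)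
    have hn1 : (0:ℝ) ≤ C * (absDiffNorm μ u v)^σ :=
      mul_nonneg hC0.le (Real.rpow_nonneg ENNReal.toReal_nonneg _)
    have hn2' : (0:ℝ) ≤ (2*S/K)^σ := Real.rpow_nonneg (div_nonneg (by linarith) hK.le) _
    have hn3 : (0:ℝ) ≤ (‖u‖+‖v‖)^(1-σ) :=
      Real.rpow_nonneg (add_nonneg (norm_nonneg _) (norm_nonneg _)) _
    calc C * (absDiffNorm μ u v)^σ * (‖u‖+‖v‖)^(1-σ)
        ≤ C * (2*S/K)^σ * (‖u‖+‖v‖)^(1-σ) := by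
          apply mul_le_mul_of_nonneg_right _ hn3
          exact mul_le_mul_of_nonneg_left hq1 hC0.le
      _ ≤ C * (2*S/K)^σ * (2*S)^(1-σ) := by
          apply mul_le_mul_of_nonneg_left hq2 (by positivity)
  have hfinal : C * (2*S/K)^σ * (2*S)^(1-σ) = S / 2 := by
    rw [Real.div_rpow (by positivity) hK.le, hKσ]
    have h2S : (0:ℝ) < 2*S := by linarith
    have hmul : (2*S)^σ * (2*S)^(1-σ) = 2*S := by
      rw [← Real.rpow_add h2S]
      norm_num
    calc C * ((2*S)^σ/(4*C)) * (2*S)^(1-σ) = ((2*S)^σ * (2*S)^(1-σ))/4 := by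
          field_simp
      _ = (2*S)/4 := by rw [hmul]
      _ = S / 2 := by ring
  rw [hfinal] at hchain
  have hsq : ‖f+g'‖^2 ≤ (S/2)^2 := pow_le_pow_left₀ (norm_nonneg _) hchain 2
  have hSsq0 : 0 < S^2 := pow_pos hS0 2
  have hdiv : (S/2)^2 = S^2/4 := by ring
  clear_value u v τ G R x y g' α₀ c S D d K
  linarith only [hsq, h3quarter, hSsq0, hdiv]
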